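/- arXiv:1505.03547 — 2 statements merged into one kernel-verified Lean document; each statement's English description precedes it below -/
import Mathlib

section
/- Let A be an Artin algebra of infinite representation type, and let M ∈ P_∞ ∩ I_∞ be an indecomposable module that is neither postprojective nor preinjective. Let S be a simple summand of the socle of M with inclusion g : S → M. Then the composite θ_S = ι_S ∘ π_S factors as h ∘ (g ∘ π_S) for some h : M → I_S, and consequently θ_S ∈ (rad_A^∞)². -/
open CategoryTheory

variable {A : Type} [Ring A]

def Indec (X : ModuleCat.{0} A) : Prop :=
  (¬ Subsingleton X) ∧ ∀ e : X ⟶ X, e ≫ e = e → e = 0 ∨ e = 𝟙 X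

def Summand (D M : ModuleCat.{0} A) : Prop :=
  ∃ (i : D ⟶ M) (r : M ⟶ D), i ≫ r = 𝟙 D

inductive InAdd (C : Set (ModuleCat.{0} A)) : ModuleCat.{0} A → Prop
  | base : ∀ {M}, M ∈ C → InAdd C M
  | prod : ∀ {M N : ModuleCat.{0} A}, InAdd C M → InAdd C N →
      InAdd C (ModuleCat.of A (M × N))
  | summand : ∀ {D M}, InAdd C M → Summand D M → InAdd C D

def relRad (C : Set (ModuleCat.{0} A)) (M N : ModuleCat.{0} A) : Set (M ⟶ N) :=
  {f | ∀ X : ModuleCat.{0} A, InAdd C X → Indec X →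
    ∀ (g : X ⟶ M) (h : N ⟶ X), ¬ IsIso (g ≫ f ≫ h)}

def radPow (C : Set (ModuleCat.{0} A)) : ℕ → ∀ M N : ModuleCat.{0} A, AddSubgroup (M ⟶ N)
  | 0, _, _ => ⊤
  | m+1, M, N => AddSubgroup.closure
      {f | ∃ (L : ModuleCat.{0} A) (g : M ⟶ L) (h : L ⟶ N),
        g ∈ radPow C m M L ∧ h ∈ relRad C L N ∧ f = g ≫ h}

def radInf (C : Set (ModuleCat.{0} A)) (M N : ModuleCat.{0} A) : AddSubgroup (M ⟶ N) :=
  ⨅ n : ℕ, radPow C (n+1) M N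

def SplitProjIn (C : Set (ModuleCat.{0} A)) (N : ModuleCat.{0} A) : Prop :=
  ∀ M : ModuleCat.{0} A, InAdd C M → ∀ f : M ⟶ N, Epi f → ∃ s : N ⟶ M, s ≫ f = 𝟙 N

def SplitInjIn (C : Set (ModuleCat.{0} A)) (N : ModuleCat.{0} A) : Prop :=
  ∀ M : ModuleCat.{0} A, InAdd C M → ∀ f : N ⟶ M, Mono f → ∃ r : M ⟶ N, f ≫ r = 𝟙 N

def P0set (C : Set (ModuleCat.{0} A)) : Set (ModuleCat.{0} A) :=
  {N | N ∈ C ∧ Indec N ∧ SplitProjIn C N}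

def I0set (C : Set (ModuleCat.{0} A)) : Set (ModuleCat.{0} A) :=
  {N | N ∈ C ∧ Indec N ∧ SplitInjIn C N}

def pRest (C : Set (ModuleCat.{0} A)) : ℕ → Set (ModuleCat.{0} A)
  | 0 => C
  | k+1 => {M | M ∈ pRest C k ∧ ∀ D ∈ P0set (pRest C k), ¬ Summand D M}

def iRest (C : Set (ModuleCat.{0} A)) : ℕ → Set (ModuleCat.{0} A)
  | 0 => C
  | k+1 => {M | M ∈ iRest C k ∧ ∀ D ∈ I0set (iRest C k), ¬ Summand D M}

def Ppart (C : Set (ModuleCat.{0} A)) (k : ℕ) : Set (ModuleCat.{0} A) := P0set (pRest C k)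

def Ipart (C : Set (ModuleCat.{0} A)) (k : ℕ) : Set (ModuleCat.{0} A) := I0set (iRest C k)

def Pinf (C : Set (ModuleCat.{0} A)) : Set (ModuleCat.{0} A) :=
  {M | M ∈ C ∧ Indec M ∧ ∀ k, M ∉ Ppart C k}

def Iinf (C : Set (ModuleCat.{0} A)) : Set (ModuleCat.{0} A) :=
  {M | M ∈ C ∧ Indec M ∧ ∀ k, M ∉ Ipart C k}

def IsCover (D C : Set (ModuleCat.{0} A)) : Prop :=
  ∀ X ∈ C, ∃ Y : ModuleCat.{0} A, InAdd D Y ∧ ∃ f : Y ⟶ X, Epi f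

def IsCocover (D C : Set (ModuleCat.{0} A)) : Prop :=
  ∀ X ∈ C, ∃ Y : ModuleCat.{0} A, InAdd D Y ∧ ∃ f : X ⟶ Y, Mono f

def Resolving (C : Set (ModuleCat.{0} A)) : Prop :=
  (∀ P : ModuleCat.{0} A, Module.Finite A P → Projective P → Indec P → P ∈ C) ∧
  (∀ (X Y Z : ModuleCat.{0} A) (f : X ⟶ Y) (g : Y ⟶ Z), Mono f → Epi g →
      Function.Exact f g → X ∈ C → Z ∈ C → Y ∈ C) ∧
  (∀ (X Y Z : ModuleCat.{0} A) (f : X ⟶ Y) (g : Y ⟶ Z), Mono f → Epi g →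
      Function.Exact f g → Y ∈ C → Z ∈ C → X ∈ C)

def Coresolving (C : Set (ModuleCat.{0} A)) : Prop :=
  (∀ I : ModuleCat.{0} A, Module.Finite A I → Injective I → Indec I → I ∈ C) ∧
  (∀ (X Y Z : ModuleCat.{0} A) (f : X ⟶ Y) (g : Y ⟶ Z), Mono f → Epi g →
      Function.Exact f g → X ∈ C → Z ∈ C → Y ∈ C) ∧
  (∀ (X Y Z : ModuleCat.{0} A) (f : X ⟶ Y) (g : Y ⟶ Z), Mono f → Epi g →
      Function.Exact f g → X ∈ C → Y ∈ C → Z ∈ C)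

def CovariantlyFinite (C : Set (ModuleCat.{0} A)) : Prop :=
  ∀ D : ModuleCat.{0} A, Module.Finite A D → ∃ C' : ModuleCat.{0} A, InAdd C C' ∧
    ∃ f : D ⟶ C', ∀ X ∈ C, ∀ g : D ⟶ X, ∃ h : C' ⟶ X, f ≫ h = g

def ContravariantlyFinite (C : Set (ModuleCat.{0} A)) : Prop :=
  ∀ D : ModuleCat.{0} A, Module.Finite A D → ∃ C' : ModuleCat.{0} A, InAdd C C' ∧
    ∃ f : C' ⟶ D, ∀ X ∈ C, ∀ g : X ⟶ D, ∃ h : X ⟶ C', h ≫ f = g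

def FinRep (S : Set (ModuleCat.{0} A)) : Prop :=
  ∃ (ι : Type) (_ : Finite ι) (rep : ι → ModuleCat.{0} A),
    ∀ M ∈ S, ∃ i, Nonempty (M ≅ rep i)

def IsProjCover {P S : ModuleCat.{0} A} (π : P ⟶ S) : Prop :=
  Projective P ∧ Epi π ∧ ∀ (Q : ModuleCat.{0} A) (g : Q ⟶ P), Epi (g ≫ π) → Epi g

def IsInjEnv {S I : ModuleCat.{0} A} (ι : S ⟶ I) : Prop :=
  Injective I ∧ Mono ι ∧ ∀ (Q : ModuleCat.{0} A) (g : I ⟶ Q), Mono (ι ≫ g) → Mono g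

def modfg (A : Type) [Ring A] : Set (ModuleCat.{0} A) := {X | Module.Finite A X}

def HasDeltaFiltration {A : Type} [Ring A] {n : ℕ} (Δ : Fin n → ModuleCat.{0} A)
    (M : ModuleCat.{0} A) : Prop :=
  ∃ (s : ℕ) (c : Fin (s+1) → Submodule A M),
    Monotone c ∧ c 0 = ⊥ ∧ c (Fin.last s) = ⊤ ∧
    ∀ i : Fin s, ∃ j : Fin n,
      Nonempty ((↥(c i.succ) ⧸ Submodule.comap (c i.succ).subtype (c i.castSucc))
          ≃ₗ[A] ↥(Δ j))

def FDelta {A : Type} [Ring A] {n : ℕ} (Δ : Fin n → ModuleCat.{0} A) :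
    Set (ModuleCat.{0} A) :=
  {M | Module.Finite A M ∧ HasDeltaFiltration Δ M}

/-!
Injectivity of `I` extends `ι` along the mono `g` to `h : M ⟶ I`, which gives the factorisation;
it remains to see that `π ≫ g` and `h` lie in `rad^∞`.

As `M ∈ P_∞`, for every `n` it lies in `pRest n` but is not split projective there, so some
epimorphism `q : Q ⟶ M` with `Q ∈ add (pRest n)` has no section; since `M` is indecomposable, `q`
is radical. The map `π ≫ g` lifts through `q` because `P` is projective, and by induction on `n`
every map from `P` into `add (pRest n)` lies in `rad^n`: a finite-length target splits into
indecomposable summands, each of which is again non-split-projective one level down. Dually,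
`h` lies in every `rad^(n+1)` because `M ∈ I_∞` and `I` is injective.
-/

lemma Summand.refl (M : ModuleCat.{0} A) : Summand M M := ⟨𝟙 M, 𝟙 M, Category.comp_id _⟩

lemma Summand.trans {D M N : ModuleCat.{0} A} : Summand D M → Summand M N → Summand D N := by
  rintro ⟨i₁, r₁, h₁⟩ ⟨i₂, r₂, h₂⟩
  exact ⟨i₁ ≫ i₂, r₂ ≫ r₁, by simp [reassoc_of% h₂, h₁]⟩

lemma Summand.of_isCompl {Y : ModuleCat.{0} A} {p q : Submodule A Y} (h : IsCompl p q) :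
    Summand (ModuleCat.of A p) Y :=
  ⟨ModuleCat.ofHom p.subtype, ModuleCat.ofHom (p.projectionOnto q h),
    by ext x; exact congrArg Subtype.val (p.projectionOnto_apply_left h x)⟩

lemma Summand.prod_of_isCompl {Y : ModuleCat.{0} A} {p q : Submodule A Y} (h : IsCompl p q) :
    Summand Y (ModuleCat.of A (p × q)) :=
  ⟨ModuleCat.ofHom (p.prodEquivOfIsCompl q h).symm.toLinearMap,
    ModuleCat.ofHom (p.prodEquivOfIsCompl q h).toLinearMap,
    by ext x; exact (p.prodEquivOfIsCompl q h).apply_symm_apply x⟩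

lemma subsingleton_of_id_eq_zero {X : ModuleCat.{0} A} (h : 𝟙 X = 0) : Subsingleton X :=
  ⟨fun a b => by
    rw [← ModuleCat.id_apply X a, ← ModuleCat.id_apply X b, h]
    rfl⟩

lemma Indec.comp_eq_id_of_summand {X N : ModuleCat.{0} A} (hN : Indec N) (hX : ¬ Subsingleton X)
    {i : X ⟶ N} {r : N ⟶ X} (h : i ≫ r = 𝟙 X) : r ≫ i = 𝟙 N := by
  have hidem : (r ≫ i) ≫ (r ≫ i) = r ≫ i := by simp [reassoc_of% h]
  refine (hN.2 _ hidem).resolve_left fun h0 => hX (subsingleton_of_id_eq_zero ?_)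
  calc 𝟙 X = i ≫ (r ≫ i) ≫ r := by simp [h]
    _ = 0 := by simp [h0]

lemma exists_isCompl_of_not_indec {Y : ModuleCat.{0} A} [Nontrivial Y] (hY : ¬ Indec Y) :
    ∃ p q : Submodule A Y, IsCompl p q ∧ p ≠ ⊥ ∧ q ≠ ⊥ := by
  obtain ⟨e, he, hne0, hne1⟩ : ∃ e : Y ⟶ Y, e ≫ e = e ∧ e ≠ 0 ∧ e ≠ 𝟙 Y := by
    simpa [Indec, not_subsingleton_iff_nontrivial.mpr ‹_›, not_or] using hY
  have hidem : IsIdempotentElem e.hom := congrArg ModuleCat.Hom.hom he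
  refine ⟨_, _, LinearMap.IsIdempotentElem.isCompl hidem, fun h => hne0 ?_, fun h => hne1 ?_⟩
  · ext x
    simpa using LinearMap.range_eq_bot.mp h ▸ rfl
  · ext x
    exact LinearMap.ker_eq_bot.mp h (LinearMap.congr_fun hidem x)

lemma InAdd.mem_of_closed {C S : Set (ModuleCat.{0} A)} (hCS : C ⊆ S)
    (hprod : ∀ {M N : ModuleCat.{0} A}, M ∈ S → N ∈ S → ModuleCat.of A (M × N) ∈ S)
    (hsummand : ∀ {D M : ModuleCat.{0} A}, M ∈ S → Summand D M → D ∈ S)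
    {Y : ModuleCat.{0} A} (hY : InAdd C Y) : Y ∈ S := by
  induction hY with
  | base hM => exact hCS hM
  | prod _ _ hM hN => exact hprod hM hN
  | summand _ hDM hM => exact hsummand hM hDM

lemma InAdd.trans {C C' : Set (ModuleCat.{0} A)} (hC : ∀ M ∈ C, InAdd C' M)
    {Y : ModuleCat.{0} A} (hY : InAdd C Y) : InAdd C' Y :=
  hY.mem_of_closed (S := {Y | InAdd C' Y}) hC InAdd.prod InAdd.summand

theorem inAdd_indec_summands (Y : ModuleCat.{0} A) [IsArtinian A Y] [IsNoetherian A Y]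
    [Nontrivial Y] : InAdd {D | Indec D ∧ Summand D Y} Y := by
  induction hℓ : Module.length A Y using WellFoundedLT.induction generalizing Y with
  | ind ℓ ih =>
    by_cases hY : Indec Y
    · exact .base ⟨hY, .refl Y⟩
    obtain ⟨p, q, hpq, hp, hq⟩ := exists_isCompl_of_not_indec hY
    have summand_inAdd : ∀ {r s : Submodule A Y}, IsCompl r s → r ≠ ⊥ → s ≠ ⊥ →
        InAdd {D | Indec D ∧ Summand D Y} (ModuleCat.of A r) := by
      intro r s hrs hr hs
      have : Nontrivial r := Submodule.nontrivial_iff_ne_bot.mpr hr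
      have hlt : Module.length A r < ℓ :=
        hℓ ▸ Submodule.length_lt (hrs.disjoint.symm.ne_top_of_ne_bot hs)
      refine (ih _ hlt (ModuleCat.of A r) rfl).trans fun D hD => .base ?_
      exact ⟨hD.1, hD.2.trans (.of_isCompl hrs)⟩
    exact .summand (.prod (summand_inAdd hpq hp hq) (summand_inAdd hpq.symm hq hp))
      (.prod_of_isCompl hpq)

section Radical

variable {C : Set (ModuleCat.{0} A)}

lemma comp_mem_relRad {M N K : ModuleCat.{0} A} {f : M ⟶ N} (hf : f ∈ relRad C M N)
    (t : N ⟶ K) : f ≫ t ∈ relRad C M K := fun X hX hXi u v => by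
  simpa only [Category.assoc] using hf X hX hXi u (t ≫ v)

-- The inverse of `u ≫ e ≫ v` exhibits the indecomposable `X` as a summand of `N`, so `X ≅ N`.
lemma relRad_of_not_split_epi {Y N : ModuleCat.{0} A} (hN : Indec N) {e : Y ⟶ N}
    (he : ∀ s : N ⟶ Y, s ≫ e ≠ 𝟙 N) : e ∈ relRad C Y N := by
  intro X _ hX u v _
  have hXN : (u ≫ e) ≫ v ≫ inv (u ≫ e ≫ v) = 𝟙 X := by
    simpa only [Category.assoc] using IsIso.hom_inv_id (u ≫ e ≫ v)
  exact he (v ≫ inv (u ≫ e ≫ v) ≫ u) (by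
    simpa only [Category.assoc] using hN.comp_eq_id_of_summand hX.1 hXN)

lemma relRad_of_not_split_mono {Z W : ModuleCat.{0} A} (hZ : Indec Z) {m : Z ⟶ W}
    (hm : ∀ r : W ⟶ Z, m ≫ r ≠ 𝟙 Z) : m ∈ relRad C Z W := by
  intro X _ hX u v _
  have hXZ : u ≫ m ≫ v ≫ inv (u ≫ m ≫ v) = 𝟙 X := by
    simpa only [Category.assoc] using IsIso.hom_inv_id (u ≫ m ≫ v)
  exact hm (v ≫ inv (u ≫ m ≫ v) ≫ u) (by
    simpa only [Category.assoc] using hZ.comp_eq_id_of_summand hX.1 hXZ)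

lemma comp_mem_radPow_succ {n : ℕ} {M L N : ModuleCat.{0} A} {g : M ⟶ L} {h : L ⟶ N}
    (hg : g ∈ radPow C n M L) (hh : h ∈ relRad C L N) : g ≫ h ∈ radPow C (n + 1) M N :=
  AddSubgroup.subset_closure ⟨L, g, h, hg, hh, rfl⟩

lemma radPow_comp_mem {n : ℕ} {M N K : ModuleCat.{0} A} {f : M ⟶ N} (hf : f ∈ radPow C n M N)
    (t : N ⟶ K) : f ≫ t ∈ radPow C n M K := by
  cases n with
  | zero => trivial
  | succ n =>
    refine (AddSubgroup.closure_le (K := (radPow C (n + 1) M K).comap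
      (Preadditive.rightComp M t))).mpr ?_ hf
    rintro _ ⟨L, g, h, hg, hh, rfl⟩
    show (g ≫ h) ≫ t ∈ radPow C (n + 1) M K
    simpa using comp_mem_radPow_succ hg (comp_mem_relRad hh t)

lemma comp_radPow_mem {n : ℕ} {M N K : ModuleCat.{0} A} (s : K ⟶ M) {f : M ⟶ N}
    (hf : f ∈ radPow C n M N) : s ≫ f ∈ radPow C n K N := by
  induction n generalizing M N K with
  | zero => trivial
  | succ n ih =>
    refine (AddSubgroup.closure_le (K := (radPow C (n + 1) K N).comap
      (Preadditive.leftComp N s))).mpr ?_ hf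
    rintro _ ⟨L, g, h, hg, hh, rfl⟩
    show s ≫ g ≫ h ∈ radPow C (n + 1) K N
    simpa using comp_mem_radPow_succ (ih s hg) hh

lemma relRad_comp_radPow_mem {n : ℕ} {M L N : ModuleCat.{0} A} {a : M ⟶ L} {b : L ⟶ N}
    (ha : a ∈ relRad C M L) (hb : b ∈ radPow C n L N) : a ≫ b ∈ radPow C (n + 1) M N := by
  induction n generalizing N with
  | zero => simpa using comp_mem_radPow_succ (n := 0) (g := 𝟙 M) trivial (comp_mem_relRad ha b)
  | succ n ih =>
    refine (AddSubgroup.closure_le (K := (radPow C (n + 1 + 1) M N).comap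
      (Preadditive.leftComp N a))).mpr ?_ hb
    rintro _ ⟨L', g, h, hg, hh, rfl⟩
    show a ≫ g ≫ h ∈ radPow C (n + 1 + 1) M N
    simpa using comp_mem_radPow_succ (ih hg) hh

end Radical

lemma ModuleCat.fst_inl_add_snd_inr (M N : ModuleCat.{0} A) :
    ModuleCat.ofHom (LinearMap.fst A M N) ≫ ModuleCat.ofHom (LinearMap.inl A M N) +
      ModuleCat.ofHom (LinearMap.snd A M N) ≫ ModuleCat.ofHom (LinearMap.inr A M N) =
      𝟙 (ModuleCat.of A (M × N)) := by
  ext x <;> simp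

lemma modfg_summand_closed {D M : ModuleCat.{0} A} (hM : M ∈ modfg A) : Summand D M →
    D ∈ modfg A := by
  rintro ⟨i, r, hir⟩
  have : Module.Finite A M := hM
  exact Module.Finite.of_surjective r.hom fun d => ⟨i d, by simp [← ModuleCat.comp_apply, hir]⟩

section Partitions

variable {C : Set (ModuleCat.{0} A)}

lemma pRest_subset : ∀ k, pRest C k ⊆ C
  | 0 => le_rfl
  | k + 1 => fun _ hM => pRest_subset k hM.1

lemma iRest_subset : ∀ k, iRest C k ⊆ C
  | 0 => le_rfl
  | k + 1 => fun _ hM => iRest_subset k hM.1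

lemma pRest_summand_closed (hC : ∀ {D M}, M ∈ C → Summand D M → D ∈ C) :
    ∀ k {D M}, M ∈ pRest C k → Summand D M → D ∈ pRest C k
  | 0, _, _, hM, h => hC hM h
  | k + 1, _, _, hM, h =>
    ⟨pRest_summand_closed hC k hM.1 h, fun E hE hED => hM.2 E hE (hED.trans h)⟩

lemma iRest_summand_closed (hC : ∀ {D M}, M ∈ C → Summand D M → D ∈ C) :
    ∀ k {D M}, M ∈ iRest C k → Summand D M → D ∈ iRest C k
  | 0, _, _, hM, h => hC hM h
  | k + 1, _, _, hM, h =>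
    ⟨iRest_summand_closed hC k hM.1 h, fun E hE hED => hM.2 E hE (hED.trans h)⟩

lemma SplitProjIn.of_iso {D M : ModuleCat.{0} A} (e : D ≅ M) (hD : SplitProjIn C D) :
    SplitProjIn C M := by
  intro Q hQ f hf
  obtain ⟨s, hs⟩ := hD Q hQ (f ≫ e.inv) inferInstance
  refine ⟨e.inv ≫ s, ?_⟩
  simpa using congrArg (e.inv ≫ · ≫ e.hom) hs

lemma SplitInjIn.of_iso {D M : ModuleCat.{0} A} (e : D ≅ M) (hD : SplitInjIn C D) :
    SplitInjIn C M := by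
  intro Q hQ f hf
  obtain ⟨t, ht⟩ := hD Q hQ (e.hom ≫ f) inferInstance
  refine ⟨t ≫ e.hom, ?_⟩
  simpa using congrArg (e.inv ≫ · ≫ e.hom) ht

lemma Summand.iso_of_indec {D M : ModuleCat.{0} A} (h : Summand D M) (hD : Indec D)
    (hM : Indec M) : Nonempty (D ≅ M) := by
  obtain ⟨i, r, hir⟩ := h
  exact ⟨⟨i, r, hir, hM.comp_eq_id_of_summand hD.1 hir⟩⟩

lemma mem_pRest_of_mem_Pinf {M : ModuleCat.{0} A} (hM : M ∈ Pinf C) : ∀ k, M ∈ pRest C k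
  | 0 => hM.1
  | k + 1 => ⟨mem_pRest_of_mem_Pinf hM k, fun _ ⟨_, hD, hsplit⟩ hDM =>
      hM.2.2 k ⟨mem_pRest_of_mem_Pinf hM k, hM.2.1,
        hsplit.of_iso (hDM.iso_of_indec hD hM.2.1).some⟩⟩

lemma mem_iRest_of_mem_Iinf {M : ModuleCat.{0} A} (hM : M ∈ Iinf C) : ∀ k, M ∈ iRest C k
  | 0 => hM.1
  | k + 1 => ⟨mem_iRest_of_mem_Iinf hM k, fun _ ⟨_, hD, hsplit⟩ hDM =>
      hM.2.2 k ⟨mem_iRest_of_mem_Iinf hM k, hM.2.1,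
        hsplit.of_iso (hDM.iso_of_indec hD hM.2.1).some⟩⟩

lemma not_splitProjIn_of_mem_Pinf {M : ModuleCat.{0} A} (hM : M ∈ Pinf C) (k : ℕ) :
    ¬ SplitProjIn (pRest C k) M :=
  fun h => hM.2.2 k ⟨mem_pRest_of_mem_Pinf hM k, hM.2.1, h⟩

lemma not_splitInjIn_of_mem_Iinf {M : ModuleCat.{0} A} (hM : M ∈ Iinf C) (k : ℕ) :
    ¬ SplitInjIn (iRest C k) M :=
  fun h => hM.2.2 k ⟨mem_iRest_of_mem_Iinf hM k, hM.2.1, h⟩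

end Partitions

lemma mem_radPow_of_inAdd_target {C C' : Set (ModuleCat.{0} A)} {n : ℕ} {P : ModuleCat.{0} A}
    (hC' : ∀ Y ∈ C', ∀ f : P ⟶ Y, f ∈ radPow C n P Y)
    {Y : ModuleCat.{0} A} (hY : InAdd C' Y) (f : P ⟶ Y) : f ∈ radPow C n P Y := by
  revert f
  refine hY.mem_of_closed (S := {Y | ∀ f : P ⟶ Y, f ∈ radPow C n P Y}) hC' ?_ ?_
  · intro M N hM hN f
    rw [← Category.comp_id f, ← ModuleCat.fst_inl_add_snd_inr, Preadditive.comp_add,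
      ← Category.assoc, ← Category.assoc]
    exact add_mem (radPow_comp_mem (hM _) _) (radPow_comp_mem (hN _) _)
  · rintro D M hM ⟨i, r, hir⟩ f
    simpa [hir] using radPow_comp_mem (hM (f ≫ i)) r

section Projective

variable {C C' : Set (ModuleCat.{0} A)} {n : ℕ} (P : ModuleCat.{0} A) [Projective P]

lemma mem_radPow_succ_of_not_splitProjIn {D : ModuleCat.{0} A} (hD : Indec D)
    (hD' : ¬ SplitProjIn C' D) (ih : ∀ {Q}, InAdd C' Q → ∀ f : P ⟶ Q, f ∈ radPow C n P Q)
    (f : P ⟶ D) : f ∈ radPow C (n + 1) P D := by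
  simp only [SplitProjIn, not_forall, not_exists] at hD'
  obtain ⟨Q, hQ, q, _, hq⟩ := hD'
  rw [← Projective.factorThru_comp f q]
  exact comp_mem_radPow_succ (ih hQ _) (relRad_of_not_split_epi hD hq)

theorem mem_radPow_of_projective [IsArtinianRing A] :
    ∀ (n : ℕ) {Y : ModuleCat.{0} A}, InAdd (pRest (modfg A) n) Y →
      ∀ f : P ⟶ Y, f ∈ radPow (modfg A) n P Y
  | 0, _, _, _ => trivial
  | n + 1, _, hY, f => by
    refine mem_radPow_of_inAdd_target (fun Y hY' => ?_) hY f
    by_cases hY0 : Subsingleton Y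
    · exact fun f => (ModuleCat.isZero_of_subsingleton Y).eq_of_tgt f 0 ▸ zero_mem _
    have : Nontrivial Y := not_subsingleton_iff_nontrivial.mp hY0
    have : Module.Finite A Y := pRest_subset _ hY'
    refine mem_radPow_of_inAdd_target (fun D hD => ?_) (inAdd_indec_summands Y)
    refine fun f => mem_radPow_succ_of_not_splitProjIn P hD.1 (fun hsplit => ?_)
      (mem_radPow_of_projective n) f
    exact hY'.2 D ⟨pRest_summand_closed modfg_summand_closed n hY'.1 hD.2, hD.1, hsplit⟩ hD.2

theorem mem_radInf_of_projective [IsArtinianRing A] {N : ModuleCat.{0} A}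
    (hN : N ∈ Pinf (modfg A)) (f : P ⟶ N) : f ∈ radInf (modfg A) P N :=
  AddSubgroup.mem_iInf.mpr fun n => mem_radPow_succ_of_not_splitProjIn P hN.2.1
    (not_splitProjIn_of_mem_Pinf hN n) (mem_radPow_of_projective P n) f

end Projective

lemma mem_radPow_of_inAdd_source {C C' : Set (ModuleCat.{0} A)} {n : ℕ} {I : ModuleCat.{0} A}
    (hC' : ∀ Y ∈ C', ∀ f : Y ⟶ I, f ∈ radPow C n Y I)
    {Y : ModuleCat.{0} A} (hY : InAdd C' Y) (f : Y ⟶ I) : f ∈ radPow C n Y I := by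
  revert f
  refine hY.mem_of_closed (S := {Y | ∀ f : Y ⟶ I, f ∈ radPow C n Y I}) hC' ?_ ?_
  · intro M N hM hN f
    rw [← Category.id_comp f, ← ModuleCat.fst_inl_add_snd_inr, Preadditive.add_comp,
      Category.assoc, Category.assoc]
    exact add_mem (comp_radPow_mem _ (hM _)) (comp_radPow_mem _ (hN _))
  · rintro D M hM ⟨i, r, hir⟩ f
    simpa [reassoc_of% hir] using comp_radPow_mem i (hM (r ≫ f))

section Injective

variable {C C' : Set (ModuleCat.{0} A)} {n : ℕ} (I : ModuleCat.{0} A) [Injective I]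

lemma mem_radPow_succ_of_not_splitInjIn {D : ModuleCat.{0} A} (hD : Indec D)
    (hD' : ¬ SplitInjIn C' D) (ih : ∀ {Q}, InAdd C' Q → ∀ f : Q ⟶ I, f ∈ radPow C n Q I)
    (f : D ⟶ I) : f ∈ radPow C (n + 1) D I := by
  simp only [SplitInjIn, not_forall, not_exists] at hD'
  obtain ⟨Q, hQ, m, _, hm⟩ := hD'
  rw [← Injective.comp_factorThru f m]
  exact relRad_comp_radPow_mem (relRad_of_not_split_mono hD hm) (ih hQ _)

theorem mem_radPow_of_injective [IsArtinianRing A] :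
    ∀ (n : ℕ) {Y : ModuleCat.{0} A}, InAdd (iRest (modfg A) n) Y →
      ∀ f : Y ⟶ I, f ∈ radPow (modfg A) n Y I
  | 0, _, _, _ => trivial
  | n + 1, _, hY, f => by
    refine mem_radPow_of_inAdd_source (fun Y hY' => ?_) hY f
    by_cases hY0 : Subsingleton Y
    · exact fun f => (ModuleCat.isZero_of_subsingleton Y).eq_of_src f 0 ▸ zero_mem _
    have : Nontrivial Y := not_subsingleton_iff_nontrivial.mp hY0
    have : Module.Finite A Y := iRest_subset _ hY'
    refine mem_radPow_of_inAdd_source (fun D hD => ?_) (inAdd_indec_summands Y)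
    refine fun f => mem_radPow_succ_of_not_splitInjIn I hD.1 (fun hsplit => ?_)
      (mem_radPow_of_injective n) f
    exact hY'.2 D ⟨iRest_summand_closed modfg_summand_closed n hY'.1 hD.2, hD.1, hsplit⟩ hD.2

theorem mem_radInf_of_injective [IsArtinianRing A] {N : ModuleCat.{0} A}
    (hN : N ∈ Iinf (modfg A)) (f : N ⟶ I) : f ∈ radInf (modfg A) N I :=
  AddSubgroup.mem_iInf.mpr fun n => mem_radPow_succ_of_not_splitInjIn I hN.2.1
    (not_splitInjIn_of_mem_Iinf hN n) (mem_radPow_of_injective I n) f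

end Injective

theorem stmt7_general {R : Type} [CommRing R] [IsArtinianRing R] {A : Type} [Ring A]
    [Algebra R A] [Module.Finite R A]
    (M S P I : ModuleCat.{0} A)
    (hMP : M ∈ Pinf (modfg A)) (hMI : M ∈ Iinf (modfg A))
    (g : S ⟶ M) (hg : CategoryTheory.Mono g)
    (π : P ⟶ S) (hπ : IsProjCover π) (ι : S ⟶ I) (hι : IsInjEnv ι) :
    (∃ h : M ⟶ I, (π ≫ g) ≫ h = π ≫ ι) ∧
    ∃ (N : ModuleCat.{0} A) (f₁ : P ⟶ N) (f₂ : N ⟶ I),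
      f₁ ∈ radInf (modfg A) P N ∧ f₂ ∈ radInf (modfg A) N I ∧ π ≫ ι = f₁ ≫ f₂ := by
  have : Projective P := hπ.1
  have : Injective I := hι.1
  have : IsArtinianRing A := .of_finite R A
  have hfac : (π ≫ g) ≫ Injective.factorThru ι g = π ≫ ι := by
    rw [Category.assoc, Injective.comp_factorThru]
  exact ⟨⟨_, hfac⟩, M, π ≫ g, _, mem_radInf_of_projective P hMP _,
    mem_radInf_of_injective I hMI _, hfac.symm⟩

/-- for A of infinite type, M ∈ P_∞ ∩ I_∞ indecomposable and S a simple
submodule (summand of the socle) of M with inclusion g, θ_S = ι_S ∘ π_S factors as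
h ∘ (g ∘ π_S) and hence lies in (rad_A^∞)². -/
theorem stmt7 {R : Type} [CommRing R] [IsArtinianRing R] {A : Type} [Ring A]
    [Algebra R A] [Module.Finite R A]
    (hinf : ¬ FinRep {X : ModuleCat.{0} A | Module.Finite A X ∧ Indec X})
    (M S P I : ModuleCat.{0} A)
    (hMfg : Module.Finite A M) (hSfg : Module.Finite A S)
    (hPfg : Module.Finite A P) (hIfg : Module.Finite A I)
    (hMP : M ∈ Pinf (modfg A)) (hMI : M ∈ Iinf (modfg A)) (hMind : Indec M)
    (hS : IsSimpleModule A S) (g : S ⟶ M) (hg : CategoryTheory.Mono g)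
    (π : P ⟶ S) (hπ : IsProjCover π) (ι : S ⟶ I) (hι : IsInjEnv ι) :
    (∃ h : M ⟶ I, (π ≫ g) ≫ h = π ≫ ι) ∧
    ∃ (N : ModuleCat.{0} A) (f₁ : P ⟶ N) (f₂ : N ⟶ I),
      f₁ ∈ radInf (modfg A) P N ∧ f₂ ∈ radInf (modfg A) N I ∧ π ≫ ι = f₁ ≫ f₂ :=
  stmt7_general (R := R) M S P I hMP hMI g hg π hπ ι hι
end

section
/- Let A be a quasi-hereditary algebra and ℱ(Δ) the category of Δ-good modules. If ℱ(Δ) is infinite (contains infinitely many indecomposables up to isomorphism), then there exists an index i with Δ(i) ∈ P_∞(Δ), i.e., some standard module is not postprojective in ℱ(Δ). -/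
open CategoryTheory

variable {A : Type} [Ring A]

/-!
If every standard module lay in some finite level of the postprojective partition, finitely many
levels `0, …, m` would contain them all. A nonzero module of `ℱ(Δ)` surviving past level `m` maps
onto some `Δ(j)` (the top factor of its Δ-filtration), and that epimorphism splits because `Δ(j)` is
split projective at its own level; so `Δ(j)` is a summand and the module should have been removed.
Hence every indecomposable of `ℱ(Δ)` already occurs in one of the levels `0, …, m`, each of which
has finitely many isoclasses, and `ℱ(Δ)` is finite.
-/

section Postprojective

variable {A : Type} [Ring A]

lemma pRest_antitone (C : Set (ModuleCat.{0} A)) : Antitone (pRest C) :=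
  antitone_nat_of_succ_le fun _ _ hM => hM.1

lemma Summand.nonempty_iso_of_indec {D M : ModuleCat.{0} A} (h : Summand D M) (hM : Indec M)
    (hD : Indec D) : Nonempty (M ≅ D) := by
  obtain ⟨i, r, hir⟩ := h
  have hidem : (r ≫ i) ≫ (r ≫ i) = r ≫ i := by
    rw [Category.assoc, ← Category.assoc i r i, hir, Category.id_comp]
  rcases hM.2 (r ≫ i) hidem with h0 | h1
  · have hid : (𝟙 D : D ⟶ D) = 0 :=
      calc (𝟙 D : D ⟶ D) = (i ≫ r) ≫ (i ≫ r) := by rw [hir, Category.id_comp]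
        _ = i ≫ (r ≫ i) ≫ r := by simp only [Category.assoc]
        _ = 0 := by rw [h0, Limits.zero_comp, Limits.comp_zero]
    exact absurd (subsingleton_of_forall_eq 0 fun x => by
      simpa using congrArg (fun f : D ⟶ D => f x) hid) hD.1
  · exact ⟨⟨r, i, h1, hir⟩⟩

lemma not_epi_of_mem_Ppart {C : Set (ModuleCat.{0} A)} {k : ℕ} {D M : ModuleCat.{0} A}
    (hD : D ∈ Ppart C k) (hM : M ∈ pRest C (k + 1)) (f : M ⟶ D) : ¬ Epi f := fun hf =>
  let ⟨s, hs⟩ := hD.2.2 M (InAdd.base hM.1) f hf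
  hM.2 D hD ⟨s, f, hs⟩

lemma exists_iso_mem_Ppart_of_not_mem_pRest {C : Set (ModuleCat.{0} A)} {M : ModuleCat.{0} A}
    (hC : M ∈ C) (hM : Indec M) {t : ℕ} (ht : M ∉ pRest C t) :
    ∃ k < t, ∃ D ∈ Ppart C k, Nonempty (M ≅ D) := by
  induction t with
  | zero => exact absurd hC ht
  | succ t ih =>
    by_cases hMt : M ∈ pRest C t
    · simp only [pRest, Set.mem_ofPred_eq, hMt, true_and, not_forall, not_not] at ht
      obtain ⟨D, hD, hDM⟩ := ht
      exact ⟨t, t.lt_succ_self, D, hD, hDM.nonempty_iso_of_indec hM hD.2.1⟩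
    · obtain ⟨k, hk, hD⟩ := ih hMt
      exact ⟨k, hk.trans t.lt_succ_self, hD⟩

lemma finRep_of_forall_iso_mem {S : ℕ → Set (ModuleCat.{0} A)} (hS : ∀ k, FinRep (S k))
    {T : Set (ModuleCat.{0} A)} (t : ℕ) (hT : ∀ M ∈ T, ∃ k < t, ∃ D ∈ S k, Nonempty (M ≅ D)) :
    FinRep T := by
  choose ι hι rep hrep using hS
  refine ⟨(k : Fin t) × ι k, inferInstance, fun p => rep p.1 p.2, fun M hM => ?_⟩
  obtain ⟨k, hk, D, hD, ⟨e⟩⟩ := hT M hM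
  obtain ⟨i, ⟨e'⟩⟩ := hrep k D hD
  exact ⟨⟨⟨k, hk⟩, i⟩, ⟨e ≪≫ e'⟩⟩

end Postprojective

section DeltaGood

variable {A : Type} [Ring A] {n : ℕ} (Δ : Fin n → ModuleCat.{0} A)

lemma HasDeltaFiltration.exists_surjective {M : ModuleCat.{0} A} (hM : HasDeltaFiltration Δ M)
    (hM0 : ¬ Subsingleton M) : ∃ (j : Fin n) (f : M ⟶ Δ j), Function.Surjective f := by
  obtain ⟨s, c, -, hbot, htop, hfactor⟩ := hM
  cases s with
  | zero =>
    have hbt : (⊥ : Submodule A M) = ⊤ := hbot.symm.trans htop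
    exact absurd ((Submodule.subsingleton_iff A).mp (subsingleton_iff_bot_eq_top.mp hbt)) hM0
  | succ t =>
    obtain ⟨j, ⟨e⟩⟩ := hfactor (Fin.last t)
    have hct : c (Fin.last t).succ = ⊤ := by rw [Fin.succ_last]; exact htop
    let N := Submodule.comap (c (Fin.last t).succ).subtype (c (Fin.last t).castSucc)
    let q : M ≃ₗ[A] c (Fin.last t).succ :=
      Submodule.topEquiv.symm.trans (LinearEquiv.ofEq _ _ hct.symm)
    exact ⟨j, ModuleCat.ofHom (e.toLinearMap ∘ₗ N.mkQ ∘ₗ q.toLinearMap),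
      e.surjective.comp ((Submodule.mkQ_surjective N).comp q.surjective)⟩

lemma mem_FDelta_standard (j : Fin n) (hj : Module.Finite A (Δ j)) : Δ j ∈ FDelta Δ := by
  refine ⟨hj, 1, ![⊥, ⊤], Fin.monotone_iff_le_succ.mpr fun i => ?_, rfl, rfl, fun i => ⟨j, ⟨?_⟩⟩⟩
  · fin_cases i; exact bot_le
  · obtain rfl : i = 0 := Subsingleton.elim _ _
    show (↥(⊤ : Submodule A (Δ j)) ⧸ _) ≃ₗ[A] Δ j
    have hbot : Submodule.comap (⊤ : Submodule A (Δ j)).subtype ⊥ = ⊥ := by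
      rw [Submodule.comap_bot, Submodule.ker_subtype]
    exact (Submodule.quotEquivOfEqBot _ hbot).trans Submodule.topEquiv

lemma subsingleton_of_mem_pRest_FDelta {m : ℕ}
    (hlev : ∀ j, Δ j ∈ FDelta Δ → ∃ k ≤ m, Δ j ∈ Ppart (FDelta Δ) k) {M : ModuleCat.{0} A}
    (hM : M ∈ pRest (FDelta Δ) (m + 1)) : Subsingleton M := by
  by_contra hM0
  have hMF : M ∈ FDelta Δ := pRest_antitone _ (Nat.zero_le _) hM
  obtain ⟨j, f, hf⟩ := hMF.2.exists_surjective Δ hM0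
  have : Module.Finite A M := hMF.1
  obtain ⟨k, hkm, hk⟩ :=
    hlev j (mem_FDelta_standard Δ j (Module.Finite.of_surjective f.hom hf))
  exact not_epi_of_mem_Ppart hk (pRest_antitone _ (Nat.succ_le_succ hkm) hM) f
    ((ModuleCat.epi_iff_surjective f).mpr hf)

end DeltaGood

theorem stmt10_general {A : Type} [Ring A]
    {n : ℕ} (Δ : Fin n → ModuleCat.{0} A)
    (hΔind : ∀ i, Indec (Δ i))
    (hfinlev : ∀ m : ℕ, FinRep (Ppart (FDelta Δ) m))
    (hinf : ¬ FinRep {M | M ∈ FDelta Δ ∧ Indec M}) :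
    ∃ i, Δ i ∈ Pinf (FDelta Δ) := by
  by_contra! hfin
  have hlevel : ∀ j, ∃ k, Δ j ∈ FDelta Δ → Δ j ∈ Ppart (FDelta Δ) k := fun j => by
    by_cases hj : Δ j ∈ FDelta Δ
    · simpa [Pinf, hj, hΔind j] using hfin j
    · exact ⟨0, fun h => absurd h hj⟩
  choose K hK using hlevel
  obtain ⟨m, hm⟩ := Finite.exists_le K
  have hlev : ∀ j, Δ j ∈ FDelta Δ → ∃ k ≤ m, Δ j ∈ Ppart (FDelta Δ) k :=
    fun j hj => ⟨K j, hm j, hK j hj⟩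
  exact hinf <| finRep_of_forall_iso_mem hfinlev (m + 1) fun M ⟨hMF, hM⟩ =>
    exists_iso_mem_Ppart_of_not_mem_pRest hMF hM fun hMt =>
      hM.1 (subsingleton_of_mem_pRest_FDelta Δ hlev hMt)

/-- if ℱ(Δ) is infinite then some standard module Δ(i) lies in P_∞(Δ). -/
theorem stmt10 {R : Type} [CommRing R] [IsArtinianRing R] {A : Type} [Ring A]
    [Algebra R A] [Module.Finite R A] {n : ℕ} (Δ : Fin n → ModuleCat.{0} A)
    (hΔind : ∀ i, Indec (Δ i))
    (hcov : CovariantlyFinite (FDelta Δ))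
    (hcovers : ∀ m : ℕ, IsCover (Ppart (FDelta Δ) m) (pRest (FDelta Δ) m))
    (hfinlev : ∀ m : ℕ, FinRep (Ppart (FDelta Δ) m))
    (hinf : ¬ FinRep {M | M ∈ FDelta Δ ∧ Indec M}) :
    ∃ i, Δ i ∈ Pinf (FDelta Δ) :=
  stmt10_general Δ hΔind hfinlev hinf
end
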